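/- arXiv:2102.01412 — 11 statements merged into one kernel-verified Lean document; each statement's English description precedes it below -/
import Mathlib

section
/- Let x be a string of length n over alphabet Σ, let s ≤ n, and suppose every length-s substring of x is unique (x is s-repeat-free). Then x is uniquely determined by the multiset of its length-(s+1) substrings; i.e., if y is any string of length n that is s-repeat-free and has the same multiset of (s+1)-substrings as x, then y = x. -/
/-- The length-`s` substring of `x` starting at index `i`. -/
def substr {α : Type*} (x : ℕ → α) (i s : ℕ) : Fin s → α := fun k => x (i + k)

/-- A string of length `n` is `s`-repeat-free if all its length-`s` substrings
(at indices `0 ≤ i ≤ n - s`) are pairwise distinct. -/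
def repeatFree {α : Type*} (x : ℕ → α) (n s : ℕ) : Prop :=
  ∀ i j, i + s ≤ n → j + s ≤ n → substr x i s = substr x j s → i = j

/-- `Zmer x n m` is the multiset of length-`m` substrings of the length-`n` string `x`. -/
def Zmer {α : Type*} (x : ℕ → α) (n m : ℕ) : Multiset (Fin m → α) :=
  (Multiset.range (n + 1 - m)).map (fun i => substr x i m)

/-- an `s`-repeat-free string of length `n` is uniquely determined by
the multiset of its length-`(s+1)` substrings, among `s`-repeat-free strings. -/
theorem stmt0 {α : Type*} (n s : ℕ) (hs : s < n) (x y : ℕ → α)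
    (hx : repeatFree x n s) (hy : repeatFree y n s)
    (hZ : Zmer y n (s + 1) = Zmer x n (s + 1)) :
    ∀ i < n, y i = x i := by
  set N := n - s with hN
  have hN1 : n + 1 - (s + 1) = N := by omega
  have hNpos : 0 < N := by omega
  have pre : ∀ (z : ℕ → α) (i : ℕ),
      (fun k : Fin s => substr z i (s+1) k.castSucc) = substr z i s := by
    intro z i; funext k; simp [substr]
  have suf : ∀ (z : ℕ → α) (i : ℕ),
      (fun k : Fin s => substr z i (s+1) k.succ) = substr z (i+1) s := by
    intro z i; funext k; simp [substr]; ring_nf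
  have hP : (Multiset.range N).map (fun i => substr y i s)
      = (Multiset.range N).map (fun i => substr x i s) := by
    have h := congrArg
      (Multiset.map (fun v : Fin (s+1) → α => fun k : Fin s => v k.castSucc)) hZ
    simpa [Zmer, hN1, Multiset.map_map, Function.comp, pre] using h
  have hS : (Multiset.range N).map (fun i => substr y (i+1) s)
      = (Multiset.range N).map (fun i => substr x (i+1) s) := by
    have h := congrArg
      (Multiset.map (fun v : Fin (s+1) → α => fun k : Fin s => v k.succ)) hZ
    simpa [Zmer, hN1, Multiset.map_map, Function.comp, suf] using h
  have hA : substr y 0 s = substr x 0 s := by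
    have hmem : substr x 0 s ∈ (Multiset.range N).map (fun i => substr y i s) := by
      rw [hP]; exact Multiset.mem_map.2 ⟨0, Multiset.mem_range.2 hNpos, rfl⟩
    obtain ⟨i0, hi0, hey⟩ := Multiset.mem_map.1 hmem
    rw [Multiset.mem_range] at hi0
    rcases Nat.eq_zero_or_pos i0 with h | h
    · subst h; exact hey
    · exfalso
      obtain ⟨j, rfl⟩ : ∃ j, i0 = j + 1 := ⟨i0 - 1, by omega⟩
      have hmem' : substr x 0 s ∈ (Multiset.range N).map (fun i => substr x (i+1) s) := by
        rw [← hS]; exact Multiset.mem_map.2 ⟨j, Multiset.mem_range.2 (by omega), hey⟩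
      obtain ⟨j', hj', hxx⟩ := Multiset.mem_map.1 hmem'
      rw [Multiset.mem_range] at hj'
      have := hx (j'+1) 0 (by omega) (by omega) hxx
      omega
  have key : ∀ i, i < N → substr y i s = substr x i s →
      substr y i (s+1) = substr x i (s+1) := by
    intro i hi h
    have hmem : substr y i (s+1) ∈ Zmer x n (s+1) := by
      rw [← hZ]
      exact Multiset.mem_map.2 ⟨i, Multiset.mem_range.2 (by omega), rfl⟩
    obtain ⟨j, hj, hxy⟩ := Multiset.mem_map.1 hmem
    rw [Multiset.mem_range, hN1] at hj
    have hpre : substr x j s = substr x i s := by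
      rw [← pre x j, hxy, pre y i, h]
    have hji := hx j i (by omega) (by omega) hpre
    subst hji
    exact hxy.symm
  have h2 : ∀ i, i < N → substr y i s = substr x i s := by
    intro i
    induction i with
    | zero => intro _; exact hA
    | succ i ih =>
      intro hi
      have h := key i (by omega) (ih (by omega))
      rw [← suf y i, h, suf x i]
  intro k hk
  by_cases hks : k < s
  · have := congrFun hA ⟨k, hks⟩
    simpa [substr] using this
  · have hi : k - s < N := by omega
    have h := key (k-s) hi (h2 _ hi)
    have h' := congrFun h ⟨s, Nat.lt_succ_self s⟩
    simp only [substr] at h'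
    have hks' : k - s + s = k := by omega
    simpa [hks'] using h'
end

section
/- Let x, y be strings of length n over an alphabet with d_H(x,y) ≤ t, let s ≤ n, and suppose indices 0 ≤ i < j ≤ n−s satisfy j − i ≤ s − t and y_{i+[s]} = y_{j+[s]}. Then d_H(x_{i+[s]}, x_{j+[s]}) ≤ 2t. -/
/-- Hamming distance between the length-`n` prefixes of `x` and `y`. -/
def dH {α : Type*} [DecidableEq α] (x y : ℕ → α) (n : ℕ) : ℕ :=
  ((Finset.range n).filter (fun i => x i ≠ y i)).card

theorem hammingDist_substr_le_dH {α : Type*} [DecidableEq α] {x y : ℕ → α} {a s n : ℕ}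
    (h : a + s ≤ n) : hammingDist (substr x a s) (substr y a s) ≤ dH x y n := by
  refine Finset.card_le_card_of_injOn (fun k => a + (k : ℕ)) ?_ ?_
  · intro k hk
    simp only [Finset.mem_coe, Finset.mem_filter, Finset.mem_univ, true_and,
      Finset.mem_range] at hk ⊢
    exact ⟨by omega, hk⟩
  · intro k _ k' _ hkk'
    exact Fin.ext (Nat.add_left_cancel hkk')

theorem stmt2_general {α : Type*} [DecidableEq α] (n t s i j : ℕ)
    (x y : ℕ → α) (hxy : dH x y n ≤ t)
    (hij : i < j) (hjn : j + s ≤ n)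
    (heq : substr y i s = substr y j s) :
    hammingDist (substr x i s) (substr x j s) ≤ 2 * t := by
  have hi : hammingDist (substr x i s) (substr y j s) ≤ t :=
    heq ▸ (hammingDist_substr_le_dH (by omega)).trans hxy
  have hj : hammingDist (substr y j s) (substr x j s) ≤ t :=
    hammingDist_comm (substr x j s) _ ▸ (hammingDist_substr_le_dH hjn).trans hxy
  calc hammingDist (substr x i s) (substr x j s)
      ≤ hammingDist (substr x i s) (substr y j s) + hammingDist (substr y j s) (substr x j s) :=
        hammingDist_triangle _ _ _
    _ ≤ 2 * t := by omega

/-- if `d_H(x,y) ≤ t` and two windows of `y` at distance `j - i ≤ s - t`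
coincide, then the corresponding windows of `x` are at Hamming distance at most `2t`. -/
theorem stmt2 {α : Type*} [DecidableEq α] (n t s i j : ℕ) (hs : s ≤ n)
    (x y : ℕ → α) (hxy : dH x y n ≤ t)
    (hij : i < j) (hjn : j + s ≤ n) (hclose : j - i + t ≤ s)
    (heq : substr y i s = substr y j s) :
    hammingDist (substr x i s) (substr x j s) ≤ 2 * t :=
  stmt2_general n t s i j x y hxy hij hjn heq
end

section
/- Let x, y be strings of length n with d_H(x,y) ≤ t, let s ≤ n, and suppose 0 ≤ i < j ≤ n−s with s − t < j − i < s and y_{i+[s]} = y_{j+[s]}. Then d_H(x_{i+[s]}, x_{j+[s]}) ≤ t + (s − j + i). -/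
/-- if `d_H(x,y) ≤ t` and two overlapping windows of `y` at distance
`s - t < j - i < s` coincide, then the corresponding windows of `x` are at Hamming
distance at most `t + (s - (j - i))`. -/
theorem stmt3 {α : Type*} [DecidableEq α] (n t s i j : ℕ) (hs : s ≤ n)
    (x y : ℕ → α) (hxy : dH x y n ≤ t)
    (hij : i < j) (hjn : j + s ≤ n)
    (hlow : s - t < j - i) (hhigh : j - i < s)
    (heq : substr y i s = substr y j s) :
    hammingDist (substr x i s) (substr x j s) ≤ t + (s - (j - i)) := by
  classical
  have hy : ∀ k : Fin s, y (i + k) = y (j + k) := fun k => congrFun heq k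
  set A := (Finset.Ico i (i+s)).filter (fun m => x m ≠ y m) with hA
  set B := (Finset.Ico j (j+s)).filter (fun m => x m ≠ y m) with hB
  have hcard : ∀ a : ℕ,
      (Finset.univ.filter fun k : Fin s => x (a+k) ≠ y (a+k)).card =
      ((Finset.Ico a (a+s)).filter (fun m => x m ≠ y m)).card := by
    intro a
    apply Finset.card_bij (fun k _ => a + k.val)
    · intro k hk
      simp only [Finset.mem_filter, Finset.mem_univ, true_and] at hk ⊢
      exact ⟨Finset.mem_Ico.2 ⟨Nat.le_add_right _ _, by omega⟩, hk⟩
    · intro k _ l _ h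
      exact Fin.ext (by omega)
    · intro m hm
      simp only [Finset.mem_filter, Finset.mem_Ico] at hm
      exact ⟨⟨m - a, by omega⟩, by
        simp only [Finset.mem_filter, Finset.mem_univ, true_and]
        have : a + (m - a) = m := by omega
        rw [this]; exact hm.2, by simp only [Fin.val_mk]; omega⟩
  have hD : hammingDist (substr x i s) (substr x j s) ≤ A.card + B.card := by
    have h1 : hammingDist (substr x i s) (substr x j s)
        = (Finset.univ.filter fun k : Fin s => x (i+k) ≠ x (j+k)).card := rfl
    rw [h1, hA, hB, ← hcard i, ← hcard j]
    calc (Finset.univ.filter fun k : Fin s => x (i+k) ≠ x (j+k)).card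
        ≤ ((Finset.univ.filter fun k : Fin s => x (i+k) ≠ y (i+k)) ∪
           (Finset.univ.filter fun k : Fin s => x (j+k) ≠ y (j+k))).card := by
          apply Finset.card_le_card
          intro k hk
          simp only [Finset.mem_filter, Finset.mem_union, Finset.mem_univ,
            true_and] at hk ⊢
          by_contra h
          push_neg at h
          exact hk (h.1.trans ((hy k).trans h.2.symm))
      _ ≤ _ := Finset.card_union_le _ _
  have hU : (A ∪ B).card ≤ t := by
    refine le_trans (Finset.card_le_card ?_) hxy
    intro m hm
    simp only [hA, hB, Finset.mem_union, Finset.mem_filter, Finset.mem_Ico,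
      dH] at hm ⊢
    rcases hm with ⟨h1, h2⟩ | ⟨h1, h2⟩ <;>
      exact ⟨Finset.mem_range.2 (by omega), h2⟩
  have hI : (A ∩ B).card ≤ s - (j - i) := by
    have : A ∩ B ⊆ Finset.Ico j (i+s) := by
      intro m hm
      simp only [hA, hB, Finset.mem_inter, Finset.mem_filter,
        Finset.mem_Ico] at hm ⊢
      omega
    calc (A ∩ B).card ≤ (Finset.Ico j (i+s)).card := Finset.card_le_card this
      _ = s - (j - i) := by rw [Nat.card_Ico]; omega
  have := Finset.card_union_add_card_inter A B
  omega
end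

section
/- Let t, s, n be integers with s ≤ n and let x be a string of length n over an alphabet. If for all 0 ≤ i < j ≤ n−s one has d_H(x_{i+[s]}, x_{j+[s]}) > t + max{0, min{t, s − j + i}}, then for every string y with d_H(x,y) ≤ t, y is s-repeat-free (all length-s substrings of y are pairwise distinct). -/
/-!
If the windows of `y` at `i < j` coincide, the triangle inequality gives
`d(x_i, x_j) ≤ d(x_i, y_i) + d(y_j, x_j) = |A_i| + |A_j|`, where `A_k` is the set of positions of
window `k` at which `x` and `y` differ. Now `|A_i| + |A_j| = |A_i ∪ A_j| + |A_i ∩ A_j|`, the union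
lies among the at most `t` errors, and the intersection lies among the errors inside the overlap
`[j, i + s)` of the two windows, so it has at most `min t (s - (j - i))` elements.
-/

section

open Finset

variable {α : Type*}

def mismatches [DecidableEq α] (x y : ℕ → α) (a b : ℕ) : Finset ℕ :=
  {k ∈ Ico a b | x k ≠ y k}

lemma mismatches_mono [DecidableEq α] (x y : ℕ → α) {a b c d : ℕ} (hca : c ≤ a) (hbd : b ≤ d) :
    mismatches x y a b ⊆ mismatches x y c d :=
  filter_subset_filter _ (Ico_subset_Ico hca hbd)

lemma dH_eq_card_mismatches [DecidableEq α] (x y : ℕ → α) (n : ℕ) :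
    dH x y n = #(mismatches x y 0 n) := by
  rw [dH, mismatches, range_eq_Ico]

lemma hammingDist_substr_eq_card_mismatches [DecidableEq α] (x y : ℕ → α) (i s : ℕ) :
    hammingDist (substr x i s) (substr y i s) = #(mismatches x y i (i + s)) := by
  rw [hammingDist]
  refine card_bij (fun k _ => i + (k : ℕ)) (fun k hk => ?_) (fun a _ b _ h => Fin.ext (by omega))
    (fun k hk => ?_)
  · rw [mem_filter_univ] at hk
    simp only [mismatches, mem_filter, mem_Ico]
    exact ⟨⟨Nat.le_add_right _ _, by omega⟩, hk⟩
  · simp only [mismatches, mem_filter, mem_Ico] at hk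
    refine ⟨⟨k - i, by omega⟩, ?_, by simp only; omega⟩
    rw [mem_filter_univ]
    simpa only [substr, Nat.add_sub_cancel' hk.1.1] using hk.2

lemma card_mismatches_inter_le [DecidableEq α] (x y : ℕ → α) {i j : ℕ} (hij : i ≤ j) (s : ℕ) :
    #(mismatches x y i (i + s) ∩ mismatches x y j (j + s)) ≤ s - (j - i) := by
  have hsub : mismatches x y i (i + s) ∩ mismatches x y j (j + s) ⊆ Ico j (i + s) := by
    intro k hk
    simp only [mem_inter, mismatches, mem_filter, mem_Ico] at hk
    simp only [mem_Ico]
    omega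
  calc _ ≤ #(Ico j (i + s)) := card_le_card hsub
    _ = s - (j - i) := by rw [Nat.card_Ico]; omega

lemma hammingDist_substr_le_of_substr_eq [DecidableEq α] {x y : ℕ → α} {n t s i j : ℕ}
    (hy : dH x y n ≤ t) (hij : i < j) (hj : j + s ≤ n) (heq : substr y i s = substr y j s) :
    hammingDist (substr x i s) (substr x j s) ≤ t + min t (s - (j - i)) := by
  set Ai := mismatches x y i (i + s)
  set Aj := mismatches x y j (j + s)
  have hA : #(mismatches x y 0 n) ≤ t := dH_eq_card_mismatches x y n ▸ hy
  have hAi : Ai ⊆ mismatches x y 0 n := mismatches_mono x y (Nat.zero_le _) (by omega)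
  have hAj : Aj ⊆ mismatches x y 0 n := mismatches_mono x y (Nat.zero_le _) hj
  have hunion : #(Ai ∪ Aj) ≤ t := (card_le_card (union_subset hAi hAj)).trans hA
  have hinter : #(Ai ∩ Aj) ≤ min t (s - (j - i)) :=
    le_min ((card_le_card (inter_subset_left.trans hAi)).trans hA)
      (card_mismatches_inter_le x y hij.le s)
  calc hammingDist (substr x i s) (substr x j s)
      ≤ hammingDist (substr x i s) (substr y i s) + hammingDist (substr y j s) (substr x j s) :=
        heq ▸ hammingDist_triangle _ _ _
    _ = #Ai + #Aj := by
        rw [hammingDist_comm (substr y j s), hammingDist_substr_eq_card_mismatches,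
          hammingDist_substr_eq_card_mismatches]
    _ = #(Ai ∪ Aj) + #(Ai ∩ Aj) := (card_union_add_card_inter Ai Aj).symm
    _ ≤ t + min t (s - (j - i)) := add_le_add hunion hinter

lemma repeatFree_of_forall_lt {y : ℕ → α} {n s : ℕ}
    (h : ∀ i j, i < j → j + s ≤ n → substr y i s ≠ substr y j s) : repeatFree y n s := by
  intro i j hi hj heq
  by_contra hne
  rcases Nat.lt_or_gt_of_ne hne with hij | hji
  · exact h i j hij hj heq
  · exact h j i hji hi heq.symm

end

theorem stmt4_general {α : Type*} [DecidableEq α] (n t s : ℕ)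
    (x : ℕ → α)
    (hx : ∀ i j, i < j → j + s ≤ n →
      t + max 0 (min t (s - (j - i))) < hammingDist (substr x i s) (substr x j s)) :
    ∀ y : ℕ → α, dH x y n ≤ t → repeatFree y n s := by
  intro y hy
  refine repeatFree_of_forall_lt fun i j hij hj heq => ?_
  have hlt := hx i j hij hj
  rw [max_eq_right (Nat.zero_le _)] at hlt
  exact hlt.not_ge (hammingDist_substr_le_of_substr_eq hy hij hj heq)

/-- if all pairs of length-`s` windows of `x` are at Hamming distance
greater than `t + max{0, min{t, s - (j - i)}}`, then every `y` within Hamming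
distance `t` of `x` is `s`-repeat-free. -/
theorem stmt4 {α : Type*} [DecidableEq α] (n t s : ℕ) (hs : s ≤ n)
    (x : ℕ → α)
    (hx : ∀ i j, i < j → j + s ≤ n →
      t + max 0 (min t (s - (j - i))) < hammingDist (substr x i s) (substr x j s)) :
    ∀ y : ℕ → α, dH x y n ≤ t → repeatFree y n s :=
  stmt4_general n t s x hx
end

section
/- Let Σ be a finite commutative ring of size q, let s ≤ n, and let I, J ⊆ [n] be s-subsets whose increasing enumerations satisfy I(k) < J(k) for all k ∈ [s] (an observable pair). If x ∈ Σ^n is chosen uniformly at random, then the random variable u_{I,J} := x_I − x_J (coordinatewise subtraction of the restrictions of x to I and J, ordered increasingly) is uniformly distributed on Σ^s. -/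
/-!
The map `x ↦ x_I - x_J` is an additive homomorphism `Σ^n → Σ^s`, so all its nonempty fibres
are cosets of the kernel and have the same size; uniformity is therefore just surjectivity.
A preimage of `v` is built by downward recursion on the positions: at `i = I(k)` put
`x_i := x_{J(k)} + v_k`, which is legitimate because the later position `J(k) > I(k)` is assigned first.
-/

open Finset

theorem AddMonoidHom.card_fiber_mul_card_eq_of_surjective {G M : Type*} [AddGroup G]
    [Fintype G] [AddMonoid M] [Fintype M] [DecidableEq M] (f : G →+ M)
    (hf : Function.Surjective f) (y : M) :
    #{g | f g = y} * Fintype.card M = Fintype.card G := by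
  have hfibre : ∀ z : M, #{g | f g = z} = #{g | f g = y} := fun z =>
    AddMonoidHom.card_fiber_eq_of_mem_range f (hf z) (hf y)
  calc #{g | f g = y} * Fintype.card M
      = ∑ z : M, #{g | f g = z} := by simp [hfibre, mul_comm]
    _ = Fintype.card G := (card_eq_sum_card_fiberwise fun _ _ => mem_univ _).symm

section PairDiff

variable {R ι : Type*} [AddCommGroup R] {n : ℕ}

/-- For `f = I`, `g = J` this is the paper's `u_{I,J}`. -/
def pairDiff (f g : ι → Fin n) : (Fin n → R) →+ (ι → R) where
  toFun x k := x (f k) - x (g k)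
  map_zero' := by ext; simp
  map_add' x y := by ext; simp only [Pi.add_apply]; abel

open Classical in
noncomputable def pairDiffPreimage (f g : ι → Fin n) (hfg : ∀ k, f k < g k) (v : ι → R)
    (i : Fin n) : R :=
  if h : ∃ k, f k = i then pairDiffPreimage f g hfg v (g h.choose) + v h.choose else 0
termination_by n - i.val
decreasing_by
  have hlt : i < g h.choose := h.choose_spec.symm.trans_lt (hfg h.choose)
  have := (g h.choose).isLt
  omega

theorem pairDiff_pairDiffPreimage {f g : ι → Fin n} (hf : Function.Injective f)
    (hfg : ∀ k, f k < g k) (v : ι → R) : pairDiff f g (pairDiffPreimage f g hfg v) = v := by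
  funext k
  have h : ∃ k', f k' = f k := ⟨k, rfl⟩
  have hk : h.choose = k := hf h.choose_spec
  change pairDiffPreimage f g hfg v (f k) - _ = v k
  rw [pairDiffPreimage, dif_pos h, hk, add_sub_cancel_left]

theorem pairDiff_surjective {f g : ι → Fin n} (hf : Function.Injective f)
    (hfg : ∀ k, f k < g k) : Function.Surjective (pairDiff (R := R) f g) :=
  fun v => ⟨_, pairDiff_pairDiffPreimage hf hfg v⟩

end PairDiff

theorem stmt5_general {S : Type*} [Fintype S] [CommRing S] [DecidableEq S]
    (n s : ℕ) (I J : Finset (Fin n))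
    (hI : I.card = s) (hJ : J.card = s)
    (hobs : ∀ k : Fin s, (I.orderIsoOfFin hI k : Fin n) < (J.orderIsoOfFin hJ k : Fin n))
    (v : Fin s → S) :
    (Finset.univ.filter (fun x : Fin n → S =>
        (fun k : Fin s => x (I.orderIsoOfFin hI k) - x (J.orderIsoOfFin hJ k)) = v)).card
      * (Fintype.card S) ^ s = (Fintype.card S) ^ n := by
  have hinj : Function.Injective fun k => (I.orderIsoOfFin hI k : Fin n) :=
    Subtype.val_injective.comp (I.orderIsoOfFin hI).injective
  have hcount := (pairDiff _ _).card_fiber_mul_card_eq_of_surjective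
    (pairDiff_surjective (R := S) hinj hobs) v
  rw [Fintype.card_fun, Fintype.card_fun, Fintype.card_fin, Fintype.card_fin] at hcount
  exact hcount

/-- for an observable pair `(I, J)` of `s`-subsets of `[n]` and a
uniformly random `x : Σ^n`, the difference `u_{I,J} = x_I - x_J` is uniformly
distributed on `Σ^s`: every value `v` is attained by exactly `q^n / q^s` strings. -/
theorem stmt5 {S : Type*} [Fintype S] [CommRing S] [DecidableEq S]
    (n s : ℕ) (hs : s ≤ n) (I J : Finset (Fin n))
    (hI : I.card = s) (hJ : J.card = s)
    (hobs : ∀ k : Fin s, (I.orderIsoOfFin hI k : Fin n) < (J.orderIsoOfFin hJ k : Fin n))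
    (v : Fin s → S) :
    (Finset.univ.filter (fun x : Fin n → S =>
        (fun k : Fin s => x (I.orderIsoOfFin hI k) - x (J.orderIsoOfFin hJ k)) = v)).card
      * (Fintype.card S) ^ s = (Fintype.card S) ^ n :=
  stmt5_general n s I J hI hJ hobs v
end

section
/- Let Σ be a finite ring of size q, let (I,J) be an observable pair of s-subsets of [n], and let x ∈ Σ^n be uniform. Then u_{I,J} = x_I − x_J is independent of the tuple x_{[n]∖I} (the restriction of x to coordinates outside I). Consequently, u_{I,J} is mutually independent of any family {u_{P,Q}} of difference vectors indexed by observable pairs (P,Q) with (P ∪ Q) ∩ I = ∅. -/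
/-- for an observable pair `(I, J)` of `s`-subsets of `[n]` and a
uniformly random `x : Σ^n`, the random variable `u_{I,J} = x_I - x_J` is independent
of the restriction of `x` to the coordinates outside `I`.  (Independence is stated
pointwise: the joint distribution factorizes; since any family `{u_{P,Q}}` with
`(P ∪ Q) ∩ I = ∅` is a function of `x_{[n]∖I}`, mutual independence of `u_{I,J}`
from such a family follows.) -/
theorem stmt6 {S : Type*} [Fintype S] [CommRing S] [DecidableEq S]
    (n s : ℕ) (hs : s ≤ n) (I J : Finset (Fin n))
    (hI : I.card = s) (hJ : J.card = s)
    (hobs : ∀ k : Fin s, (I.orderIsoOfFin hI k : Fin n) < (J.orderIsoOfFin hJ k : Fin n))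
    (v : Fin s → S) (w : {i : Fin n // i ∉ I} → S) :
    (Finset.univ.filter (fun x : Fin n → S =>
        (fun k : Fin s => x (I.orderIsoOfFin hI k) - x (J.orderIsoOfFin hJ k)) = v
          ∧ (fun i : {i : Fin n // i ∉ I} => x i.1) = w)).card
      * (Fintype.card S) ^ n
    = (Finset.univ.filter (fun x : Fin n → S =>
        (fun k : Fin s => x (I.orderIsoOfFin hI k) - x (J.orderIsoOfFin hJ k)) = v)).card
      * (Finset.univ.filter (fun x : Fin n → S =>
          (fun i : {i : Fin n // i ∉ I} => x i.1) = w)).card := by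
  classical
  set φ : (Fin n → S) → (Fin s → S) × ({i : Fin n // i ∉ I} → S) :=
    fun x => (fun k : Fin s => x (I.orderIsoOfFin hI k) - x (J.orderIsoOfFin hJ k),
      fun i : {i : Fin n // i ∉ I} => x i.1) with hφ
  have hcompl : Fintype.card {i : Fin n // i ∉ I} = n - s := by
    simp [Fintype.card_subtype_compl, hI]
  have hinj : Function.Injective φ := by
    intro x y hxy
    have h1 : (fun k : Fin s => x (I.orderIsoOfFin hI k) - x (J.orderIsoOfFin hJ k))
        = fun k : Fin s => y (I.orderIsoOfFin hI k) - y (J.orderIsoOfFin hJ k) :=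
      congrArg Prod.fst hxy
    have h2 : (fun i : {i : Fin n // i ∉ I} => x i.1)
        = fun i : {i : Fin n // i ∉ I} => y i.1 := congrArg Prod.snd hxy
    have key : ∀ m : ℕ, ∀ i : Fin n, n - i.val ≤ m → x i = y i := by
      intro m
      induction m with
      | zero => intro i h; exact absurd h (by have := i.isLt; omega)
      | succ m ih =>
        intro i h
        by_cases hi : i ∈ I
        · set k := (I.orderIsoOfFin hI).symm ⟨i, hi⟩ with hk
          have hik : (I.orderIsoOfFin hI k : Fin n) = i := by
            rw [hk, OrderIso.apply_symm_apply]
          have hlt : i.val < ((J.orderIsoOfFin hJ k : Fin n) : ℕ) := by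
            have := hobs k
            rw [hik] at this
            exact this
          have hJeq : x (J.orderIsoOfFin hJ k) = y (J.orderIsoOfFin hJ k) :=
            ih _ (by omega)
          have h1k := congrFun h1 k
          rw [hik, hJeq] at h1k
          exact sub_left_injective h1k
        · exact congrFun h2 ⟨i, hi⟩
    funext i
    exact key n i (by omega)
  have hq : Fintype.card S ^ n = Fintype.card S ^ s * Fintype.card S ^ (n - s) := by
    rw [← pow_add]
    congr 1
    omega
  have hcard : Fintype.card (Fin n → S)
      = Fintype.card ((Fin s → S) × ({i : Fin n // i ∉ I} → S)) := by
    simp [Fintype.card_fun, hcompl, hq]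
  have hbij : Function.Bijective φ :=
    (Fintype.bijective_iff_injective_and_card φ).2 ⟨hinj, hcard⟩
  set e := Equiv.ofBijective φ hbij with he
  have hA : (Finset.univ.filter (fun x : Fin n → S =>
        (fun k : Fin s => x (I.orderIsoOfFin hI k) - x (J.orderIsoOfFin hJ k)) = v
          ∧ (fun i : {i : Fin n // i ∉ I} => x i.1) = w)).card = 1 := by
    have hset : (Finset.univ.filter (fun x : Fin n → S =>
        (fun k : Fin s => x (I.orderIsoOfFin hI k) - x (J.orderIsoOfFin hJ k)) = v
          ∧ (fun i : {i : Fin n // i ∉ I} => x i.1) = w)) = {e.symm (v, w)} := by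
      ext x
      simp only [Finset.mem_filter, Finset.mem_univ, true_and, Finset.mem_singleton,
        Equiv.eq_symm_apply]
      constructor
      · rintro ⟨ha, hb⟩
        exact Prod.ext ha hb
      · intro hx
        exact ⟨congrArg Prod.fst hx, congrArg Prod.snd hx⟩
    rw [hset, Finset.card_singleton]
  have hB : (Finset.univ.filter (fun x : Fin n → S =>
        (fun k : Fin s => x (I.orderIsoOfFin hI k) - x (J.orderIsoOfFin hJ k)) = v)).card
      = Fintype.card S ^ (n - s) := by
    rw [Finset.card_equiv e (t := Finset.univ.filter (fun p :
        (Fin s → S) × ({i : Fin n // i ∉ I} → S) => p.1 = v)) (fun x => by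
      simp only [Finset.mem_filter, Finset.mem_univ, true_and]
      rfl)]
    have hset : (Finset.univ.filter (fun p :
        (Fin s → S) × ({i : Fin n // i ∉ I} → S) => p.1 = v))
        = {v} ×ˢ Finset.univ := by
      ext p
      rw [Finset.mem_product]
      simp
    rw [hset, Finset.card_product, Finset.card_singleton, one_mul, Finset.card_univ,
      Fintype.card_fun, hcompl]
  have hC : (Finset.univ.filter (fun x : Fin n → S =>
        (fun i : {i : Fin n // i ∉ I} => x i.1) = w)).card
      = Fintype.card S ^ s := by
    rw [Finset.card_equiv e (t := Finset.univ.filter (fun p :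
        (Fin s → S) × ({i : Fin n // i ∉ I} → S) => p.2 = w)) (fun x => by
      simp only [Finset.mem_filter, Finset.mem_univ, true_and]
      rfl)]
    have hset : (Finset.univ.filter (fun p :
        (Fin s → S) × ({i : Fin n // i ∉ I} → S) => p.2 = w))
        = Finset.univ ×ˢ {w} := by
      ext p
      rw [Finset.mem_product]
      simp
    rw [hset, Finset.card_product, Finset.card_singleton, mul_one, Finset.card_univ,
      Fintype.card_fun, Fintype.card_fin]
  rw [hA, hB, hC, one_mul, hq, mul_comm]
end

section
/- Suppose s = ⌊a·log_q n⌋, t ≥ δ·s, and there exists a string x of length n over an alphabet of size q such that every string obtained from x by at most t substitutions is s-repeat-free. Then the ⌊n/s⌋ disjoint length-s blocks x_{is+[s]}, 0 ≤ i ≤ ⌊n/s⌋ − 1, are pairwise distinct and form a code in Σ^s of size ⌊n/s⌋ with minimum Hamming distance strictly greater than t. -/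
def splice {α : Type*} {s : ℕ} (x : ℕ → α) (p : ℕ) (w : Fin s → α) : ℕ → α :=
  fun k => if h : p ≤ k ∧ k < p + s then w ⟨k - p, by omega⟩ else x k

section Splice

variable {α : Type*} {s : ℕ} (x : ℕ → α) (p : ℕ) (w : Fin s → α)

theorem substr_splice_self : substr (splice x p w) p s = w := by
  funext k
  simp [substr, splice]

theorem substr_splice_of_disjoint {i : ℕ} (h : i + s ≤ p ∨ p + s ≤ i) :
    substr (splice x p w) i s = substr x i s := by
  funext k
  have : ¬(p ≤ i + k ∧ i + k < p + s) := by omega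
  simp [substr, splice, this]

theorem dH_splice_le [DecidableEq α] (n : ℕ) :
    dH x (splice x p w) n ≤ hammingDist (substr x p s) w := by
  have hsub : (Finset.range n).filter (fun k => x k ≠ splice x p w k) ⊆
      ((Finset.univ : Finset (Fin s)).filter (fun k => substr x p s k ≠ w k)).image
        (fun k : Fin s => p + (k : ℕ)) := by
    intro k hk
    simp only [Finset.mem_filter, Finset.mem_range] at hk
    have hwin : p ≤ k ∧ k < p + s := by
      by_contra hout
      exact hk.2 (by simp [splice, hout])
    refine Finset.mem_image.mpr ⟨(⟨k - p, by omega⟩ : Fin s), ?_, by simp; omega⟩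
    refine Finset.mem_filter.mpr ⟨Finset.mem_univ _, ?_⟩
    simpa [substr, splice, hwin, Nat.add_sub_cancel' hwin.1] using hk.2
  exact (Finset.card_le_card hsub).trans Finset.card_image_le

end Splice

theorem lt_hammingDist_substr_of_resilient {α : Type*} [DecidableEq α] {x : ℕ → α}
    {n s t i j : ℕ} (hx : ∀ y : ℕ → α, dH x y n ≤ t → repeatFree y n s)
    (hi : i + s ≤ n) (hj : j + s ≤ n) (hij : i ≠ j) (hdisj : i + s ≤ j ∨ j + s ≤ i) :
    t < hammingDist (substr x i s) (substr x j s) := by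
  by_contra! hle
  set y := splice x j (substr x i s)
  have hyi : substr y i s = substr x i s := substr_splice_of_disjoint x j _ hdisj
  have hyj : substr y j s = substr x i s := substr_splice_self x j _
  have hdist : dH x y n ≤ t := by
    calc dH x y n ≤ hammingDist (substr x j s) (substr x i s) := dH_splice_le x j _ n
      _ ≤ t := by rwa [hammingDist_comm]
  exact hij (hx y hdist i j hi hj (hyi.trans hyj.symm))

theorem mul_add_le_of_lt_div {i n s : ℕ} (hs : 0 < s) (hi : i < n / s) : i * s + s ≤ n := by
  simpa [Nat.succ_mul] using (Nat.le_div_iff_mul_le hs).mp hi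

theorem mul_add_le_or_mul_add_le_of_ne {i j : ℕ} (s : ℕ) (hij : i ≠ j) :
    i * s + s ≤ j * s ∨ j * s + s ≤ i * s := by
  rcases Nat.lt_or_gt_of_ne hij with h | h
  · exact .inl (by simpa [Nat.succ_mul] using Nat.mul_le_mul_right s h)
  · exact .inr (by simpa [Nat.succ_mul] using Nat.mul_le_mul_right s h)

theorem stmt9_general {S : Type*} [DecidableEq S]
    (n s t : ℕ)
    (x : ℕ → S)
    (hx : ∀ y : ℕ → S, dH x y n ≤ t → repeatFree y n s) :
    ∀ i j, i < n / s → j < n / s → i ≠ j →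
      substr x (i * s) s ≠ substr x (j * s) s ∧
        t < hammingDist (substr x (i * s) s) (substr x (j * s) s) := by
  intro i j hi hj hij
  have hs : 0 < s := Nat.pos_of_ne_zero (by rintro rfl; simp at hi)
  have hfar : t < hammingDist (substr x (i * s) s) (substr x (j * s) s) :=
    lt_hammingDist_substr_of_resilient hx (mul_add_le_of_lt_div hs hi) (mul_add_le_of_lt_div hs hj)
      (fun h => hij (Nat.eq_of_mul_eq_mul_right hs h)) (mul_add_le_or_mul_add_le_of_ne s hij)
  exact ⟨hammingDist_pos.mp (by omega), hfar⟩

/-- if `s = ⌊a·log_q n⌋`, `t ≥ δ·s`, and `x ∈ Σ^n` is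
`(t,s)`-resilient repeat-free (every `y` within Hamming distance `t` of `x`
is `s`-repeat-free), then the `⌊n/s⌋` disjoint length-`s` blocks of `x` are
pairwise distinct and pairwise at Hamming distance strictly greater than `t`. -/
theorem stmt9 {S : Type*} [Fintype S] [DecidableEq S]
    (n s t q : ℕ) (a δ : ℝ) (hq : q = Fintype.card S)
    (hsa : s = ⌊a * Real.logb q n⌋₊) (ht : δ * s ≤ (t : ℝ)) (hsn : s ≤ n)
    (x : ℕ → S)
    (hx : ∀ y : ℕ → S, dH x y n ≤ t → repeatFree y n s) :
    ∀ i j, i < n / s → j < n / s → i ≠ j →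
      substr x (i * s) s ≠ substr x (j * s) s ∧
        t < hammingDist (substr x (i * s) s) (substr x (j * s) s) :=
  stmt9_general n s t x hx
end

section
/- If t ≥ ((q−1)/q)·s and n ≥ 2s, then no string x ∈ Σ^n (|Σ| = q) is (t,s)-resilient repeat-free; i.e., there always exists y with d_H(x,y) ≤ t such that y has two equal length-s substrings at distinct positions. -/
/-- if `t ≥ ((q-1)/q)·s` and `n ≥ 2s`, then no `x ∈ Σ^n` is
`(t,s)`-resilient repeat-free: there is some `y` within Hamming distance `t`
of `x` having two equal length-`s` substrings at distinct positions. -/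
theorem stmt10 {S : Type*} [Fintype S] [DecidableEq S]
    (n s t q : ℕ) (hq : q = Fintype.card S) (hs : 0 < s)
    (ht : ((q : ℝ) - 1) / q * s ≤ (t : ℝ)) (hn : 2 * s ≤ n)
    (x : ℕ → S) :
    ∃ y : ℕ → S, dH x y n ≤ t ∧
      ∃ i j, i < j ∧ j + s ≤ n ∧ substr y i s = substr y j s := by
  classical
  have hSne : Nonempty S := ⟨x 0⟩
  have hq1 : 1 ≤ q := by
    rw [hq]; exact Fintype.card_pos
  -- counts
  set cnt : S → ℕ := fun c => ((Finset.range (s+1)).filter (fun i => x i = c)).card with hcnt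
  have hsum : ∑ c : S, cnt c = s + 1 := by
    rw [← Finset.card_range (s+1)]
    exact (Finset.card_eq_sum_card_fiberwise (fun i _ => Finset.mem_univ (x i))).symm
  -- pigeonhole: some c with s+1 ≤ q * cnt c
  have hpig : ∃ c : S, s + 1 ≤ q * cnt c := by
    by_contra h
    push_neg at h
    have hle : ∀ c ∈ Finset.univ (α := S), cnt c * q ≤ s := by
      intro c _
      have := h c
      nlinarith [this]
    have h2 := Finset.sum_le_card_nsmul Finset.univ (fun c => cnt c * q) s hle
    rw [← Finset.sum_mul, hsum, Finset.card_univ, ← hq, smul_eq_mul] at h2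
    nlinarith
  obtain ⟨c, hc⟩ := hpig
  set m := cnt c with hm
  have hmcard : m = ((Finset.range (s+1)).filter (fun i => x i = c)).card := rfl
  -- arithmetic from ht : q*s ≤ t*q + s
  have hqR : (0:ℝ) < q := by exact_mod_cast hq1
  have hmulN : q * s ≤ t * q + s := by
    have hmul : (q:ℝ) * s ≤ t * q + s := by
      have h0 := mul_le_mul_of_nonneg_right ht (le_of_lt hqR)
      have : ((q:ℝ) - 1) / q * s * q = q * s - s := by field_simp
      nlinarith
    exact_mod_cast hmul
  have key : s + 1 ≤ t + m := by
    by_contra h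
    push_neg at h
    have htm : t + m ≤ s := by omega
    have h1 : q * (t + m) ≤ q * s := Nat.mul_le_mul_left q htm
    have h3 : q * m ≤ s := by nlinarith
    omega
  -- define y
  refine ⟨fun i => if i ≤ s then c else x i, ?_, 0, 1, one_pos, by omega, ?_⟩
  · -- distance bound
    have hsub : (Finset.range n).filter
        (fun i => x i ≠ (if i ≤ s then c else x i)) ⊆
        (Finset.range (s+1)).filter (fun i => ¬ (x i = c)) := by
      intro i hi
      simp only [Finset.mem_filter, Finset.mem_range] at hi ⊢
      by_cases h : i ≤ s
      · simp [h] at hi; exact ⟨by omega, hi.2⟩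
      · simp [h] at hi
    have hcard := Finset.card_le_card hsub
    have hpart : ((Finset.range (s+1)).filter (fun i => x i = c)).card +
        ((Finset.range (s+1)).filter (fun i => ¬ (x i = c))).card = s + 1 := by
      rw [Finset.card_filter_add_card_filter_not, Finset.card_range]
    have hdh : dH x (fun i => if i ≤ s then c else x i) n =
        ((Finset.range n).filter
          (fun i => x i ≠ (if i ≤ s then c else x i))).card := rfl
    omega
  · -- equal substrings
    funext k
    have hk : (k : ℕ) < s := k.isLt
    simp only [substr]
    have h1 : 0 + (k:ℕ) ≤ s := by omega
    have h2 : 1 + (k:ℕ) ≤ s := by omega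
    simp [h1, h2]
end

section
/- Let s, t, k be positive integers with k ≤ s, and let A_k ⊆ Σ^{s+k} be the set of strings x of length s+k for which there exists y with d_H(x,y) ≤ t and y_{[s]} = y_{k+[s]}. Then |A_k| ≥ q^k · ∑_{i=0}^{t} C(s, i)·(q−1)^i, where q = |Σ|. -/
/-!
Every word `y` of length `k + s` whose first `k` letters are `a` and which is `k`-periodic is
determined by `a`. Writing `x = a ++ g` with `g` in the Hamming ball of radius `t` around the last
`s` letters of `y`, the word `x` lies within distance `t` of `y`, and distinct pairs `(a, g)`
give distinct words `x`. Counting the pairs gives `q ^ k` times the volume of a Hamming ball of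
radius `t` in `Σ ^ s`.
-/

open Finset

section HammingBall

variable {ι β : Type*} [Fintype ι] [DecidableEq ι] [Fintype β] [DecidableEq β]

theorem card_filter_ne_iff_mem (h : ι → β) (D : Finset ι) :
    #{g : ι → β | ∀ j, g j ≠ h j ↔ j ∈ D} = (Fintype.card β - 1) ^ #D := by
  have card_fiber (j : ι) :
      Fintype.card {v : β // v ≠ h j ↔ j ∈ D} = if j ∈ D then Fintype.card β - 1 else 1 := by
    by_cases hj : j ∈ D
    · simp only [hj, if_true, iff_true]
      rw [Fintype.card_subtype_compl, Fintype.card_subtype_eq]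
    · simp only [hj, if_false, iff_false, not_not]
      exact Fintype.card_subtype_eq (h j)
  rw [← Fintype.card_subtype,
    Fintype.card_congr (Equiv.subtypePiEquivPi (p := fun j v => v ≠ h j ↔ j ∈ D)),
    Fintype.card_pi]
  simp_rw [card_fiber]
  rw [prod_ite_mem, univ_inter, prod_const]

theorem card_filter_hammingDist_eq (h : ι → β) (i : ℕ) :
    #{g : ι → β | hammingDist g h = i} = (Fintype.card ι).choose i * (Fintype.card β - 1) ^ i := by
  have diff_mem : ∀ g ∈ ({g : ι → β | hammingDist g h = i} : Finset _),
      ({j | g j ≠ h j} : Finset ι) ∈ powersetCard i univ :=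
    fun g hg => mem_powersetCard_univ.2 (mem_filter.1 hg).2
  rw [card_eq_sum_card_fiberwise diff_mem, sum_congr rfl (g := fun _ => (Fintype.card β - 1) ^ i),
    sum_const, card_powersetCard, card_univ, smul_eq_mul]
  intro D hD
  rw [← (mem_powersetCard_univ.1 hD), ← card_filter_ne_iff_mem h D, filter_filter]
  refine congrArg card (filter_congr fun g _ => ?_)
  have diff_eq_iff : ({j | g j ≠ h j} : Finset ι) = D ↔ ∀ j, g j ≠ h j ↔ j ∈ D := by
    simp [Finset.ext_iff]
  rw [← diff_eq_iff, and_iff_right_iff_imp]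
  rintro rfl
  rfl

theorem card_filter_hammingDist_le (h : ι → β) (t : ℕ) :
    #{g : ι → β | hammingDist g h ≤ t} =
      ∑ i ∈ range (t + 1), (Fintype.card ι).choose i * (Fintype.card β - 1) ^ i := by
  rw [card_eq_sum_card_fiberwise (f := fun g => hammingDist g h) (t := range (t + 1))
    fun g hg => by simpa [Nat.lt_succ_iff] using hg]
  refine sum_congr rfl fun i hi => ?_
  rw [← card_filter_hammingDist_eq h i, filter_filter]
  congr 1
  ext g
  simp only [mem_filter, mem_univ, true_and, and_iff_right_iff_imp]
  rintro rfl
  simpa [Nat.lt_succ_iff] using hi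

end HammingBall

theorem hammingDist_append {α : Type*} [DecidableEq α] {m n : ℕ} (u u' : Fin m → α)
    (v v' : Fin n → α) :
    hammingDist (Fin.append u v) (Fin.append u' v') = hammingDist u u' + hammingDist v v' := by
  simp only [hammingDist, card_filter, Fin.sum_univ_add, Fin.append_left, Fin.append_right]

def periodicWord {α : Type*} {k : ℕ} [NeZero k] (a : Fin k → α) (n : ℕ) : Fin n → α :=
  fun i => a (Fin.ofNat k i)

theorem append_periodicWord {α : Type*} {k : ℕ} [NeZero k] (a : Fin k → α) (s : ℕ) :
    Fin.append a (periodicWord a s) = periodicWord a (k + s) := by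
  funext i
  refine Fin.addCases (fun j => ?_) (fun j => ?_) i
  · simp only [periodicWord, Fin.append_left]
    congr 1
    ext
    simp
  · simp only [periodicWord, Fin.append_right]
    congr 1
    ext
    simp

theorem periodicWord_add_period {α : Type*} {k : ℕ} [NeZero k] (a : Fin k → α) {n i : ℕ}
    (hi : i < n) (hki : k + i < n) :
    periodicWord a n ⟨k + i, hki⟩ = periodicWord a n ⟨i, hi⟩ := by
  simp only [periodicWord]
  congr 1
  ext
  simp

theorem pow_mul_sum_choose_le_card_near_periodic {S : Type*} [Fintype S] [DecidableEq S]
    (n s k t : ℕ) [NeZero k] (hn : k + s = n) :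
    Fintype.card S ^ k * ∑ i ∈ range (t + 1), s.choose i * (Fintype.card S - 1) ^ i ≤
      #{x : Fin n → S | ∃ y : Fin n → S, hammingDist x y ≤ t ∧
          ∀ i, (hi : i < s) → y ⟨i, by omega⟩ = y ⟨k + i, by omega⟩} := by
  subst hn
  calc Fintype.card S ^ k * ∑ i ∈ range (t + 1), s.choose i * (Fintype.card S - 1) ^ i
      = #(univ.sigma fun a : Fin k → S =>
          ({g : Fin s → S | hammingDist g (periodicWord a s) ≤ t} : Finset _)) := by
        rw [card_sigma]
        simp only [card_filter_hammingDist_le, Fintype.card_fin, sum_const, card_univ,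
          Fintype.card_fun, smul_eq_mul]
    _ ≤ _ := by
      refine card_le_card_of_injOn (fun p => Fin.append p.1 p.2) ?_ ?_
      · rintro ⟨a, g⟩ hg
        simp only [mem_coe, mem_sigma, mem_filter, mem_univ, true_and] at hg ⊢
        refine ⟨periodicWord a (k + s), ?_, fun i hi => (periodicWord_add_period a _ _).symm⟩
        rwa [← append_periodicWord, hammingDist_append, hammingDist_self, zero_add]
      · rintro ⟨a, g⟩ - ⟨a', g'⟩ - h
        obtain ⟨rfl, rfl⟩ := Prod.mk.inj ((Fin.appendEquiv k s).injective h)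
        rfl

/-- lower bound on the size of
`A_k = {x ∈ Σ^{s+k} : ∃ y, d_H(x,y) ≤ t and y has period k (y_{[s]} = y_{k+[s]})}`:
`|A_k| ≥ q^k · ∑_{i=0}^{t} C(s,i)·(q-1)^i`. -/
theorem stmt11 {S : Type*} [Fintype S] [DecidableEq S]
    (s t k q : ℕ) (hq : q = Fintype.card S) (hk0 : 0 < k) :
    q ^ k * ∑ i ∈ Finset.range (t + 1), Nat.choose s i * (q - 1) ^ i ≤
      (Finset.univ.filter (fun x : Fin (s + k) → S =>
        ∃ y : Fin (s + k) → S, hammingDist x y ≤ t ∧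
          ∀ i, (hi : i < s) → y ⟨i, by omega⟩ = y ⟨k + i, by omega⟩)).card := by
  subst hq
  have : NeZero k := ⟨hk0.ne'⟩
  exact pow_mul_sum_choose_le_card_near_periodic (s + k) s k t (Nat.add_comm k s)
end

section
/- Let s, t, k be positive integers with s/2 < k ≤ s, and let x, y ∈ Σ^{s+k} with d_H(x,y) ≤ t and y periodic with period k (y_{[s]} = y_{k+[s]}). Write I_1=[0,s−k), I_2=[s−k,k), I_3=[k,s), I_4=[s,2k), I_5=[2k,s+k), so that y = y_{I_1} y_{I_2} y_{I_1} y_{I_2} y_{I_1}. Then the string y' := y_{I_1} x_{I_2} y_{I_1} x_{I_2} y_{I_1} also has period k and satisfies d_H(x, y') ≤ d_H(x, y) ≤ t. -/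
/-!
On each of `I₁, I₃, I₅` the string `y'` agrees with `y`, by periodicity of `y`. The remaining
positions come in pairs `j, j + k` with `j ∈ I₂`, where `y` takes one value `c := y j = y (j + k)`
while `y'` takes the value `x j` twice; the pair contributes `[x (j + k) ≠ x j]` mismatches to
`d_H(x, y')` and `[x j ≠ c] + [x (j + k) ≠ c]` to `d_H(x, y)`, and the former is at most the
latter by the triangle inequality for the discrete metric.
-/

open Finset

theorem sum_range_add_eq_sum_pairs {M : Type*} [AddCommMonoid M] (f : ℕ → M) {s k : ℕ}
    (hk : k ≤ s) (hk2 : s ≤ 2 * k) :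
    ∑ i ∈ range (s + k), f i =
      ∑ i ∈ range (s - k), f i + ∑ i ∈ Ico k s, f i + ∑ i ∈ Ico (2 * k) (s + k), f i +
        ∑ j ∈ Ico (s - k) k, (f j + f (j + k)) := by
  have hs : s - k + k = s := Nat.sub_add_cancel hk
  rw [sum_add_distrib, sum_Ico_add', hs, ← two_mul, range_eq_Ico, range_eq_Ico,
    ← sum_Ico_consecutive f (Nat.zero_le (s - k)) (by omega : s - k ≤ s + k),
    ← sum_Ico_consecutive f (by omega : s - k ≤ k) (by omega : k ≤ s + k),
    ← sum_Ico_consecutive f hk (by omega : s ≤ s + k),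
    ← sum_Ico_consecutive f hk2 (by omega : 2 * k ≤ s + k)]
  abel

theorem dH_eq_sum {α : Type*} [DecidableEq α] (x y : ℕ → α) (n : ℕ) :
    dH x y n = ∑ i ∈ range n, if x i ≠ y i then 1 else 0 :=
  card_filter _ _

theorem ite_ne_le_add {α : Type*} [DecidableEq α] (a b c : α) :
    (if b ≠ a then 1 else 0 : ℕ) ≤ (if a ≠ c then 1 else 0) + (if b ≠ c then 1 else 0) := by
  split_ifs <;> simp_all

theorem dH_le_of_eq_of_pairs {α : Type*} [DecidableEq α] {s k : ℕ} (hk : k ≤ s) (hk2 : s ≤ 2 * k)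
    {x y y' : ℕ → α}
    (h₁ : ∀ i < s - k, y' i = y i) (h₃ : ∀ i ∈ Ico k s, y' i = y i)
    (h₅ : ∀ i ∈ Ico (2 * k) (s + k), y' i = y i)
    (hpair : ∀ j ∈ Ico (s - k) k, y' j = x j ∧ y' (j + k) = x j ∧ y j = y (j + k)) :
    dH x y' (s + k) ≤ dH x y (s + k) := by
  rw [dH_eq_sum, dH_eq_sum, sum_range_add_eq_sum_pairs _ hk hk2,
    sum_range_add_eq_sum_pairs _ hk hk2]
  refine add_le_add (add_le_add (add_le_add (sum_congr rfl ?_).le (sum_congr rfl ?_).le)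
    (sum_congr rfl ?_).le) (sum_le_sum fun j hj => ?_)
  · intro i hi
    rw [h₁ i (mem_range.mp hi)]
  · intro i hi
    rw [h₃ i hi]
  · intro i hi
    rw [h₅ i hi]
  · obtain ⟨hj₀, hj₁, hy⟩ := hpair j hj
    rw [hj₀, hj₁, hy, if_neg (not_not.mpr rfl), zero_add]
    exact ite_ne_le_add (x j) (x (j + k)) (y (j + k))

theorem apply_sub_eq_of_periodic {α : Type*} {s k : ℕ} {y : ℕ → α}
    (hper : ∀ i, i < s → y i = y (i + k)) {i : ℕ} (hi : k ≤ i) (hi' : i < s + k) :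
    y (i - k) = y i := by
  simpa [Nat.sub_add_cancel hi] using hper (i - k) (by omega)

section periodicPatch

variable {α : Type*} {s k : ℕ} {x y : ℕ → α}

/-- The string `y_{I₁} x_{I₂} y_{I₁} x_{I₂} y_{I₁}`. -/
def periodicPatch (s k : ℕ) (x y : ℕ → α) (i : ℕ) : α :=
  if i < s - k then y i
  else if i < k then x i
  else if i < s then y (i - k)
  else if i < 2 * k then x (i - k)
  else y (i - 2 * k)

theorem periodicPatch_add_period (hk2 : s ≤ 2 * k) {i : ℕ} (hi : i < s) :
    periodicPatch s k x y i = periodicPatch s k x y (i + k) := by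
  unfold periodicPatch
  split_ifs <;> first | omega | (congr 1; omega)

theorem periodicPatch_of_lt {i : ℕ} (hi : i < s - k) : periodicPatch s k x y i = y i :=
  if_pos hi

theorem periodicPatch_of_mem_Ico_sub {j : ℕ} (hj : j ∈ Ico (s - k) k) :
    periodicPatch s k x y j = x j ∧ periodicPatch s k x y (j + k) = x j := by
  obtain ⟨hj₁, hj₂⟩ := mem_Ico.mp hj
  refine ⟨?_, ?_⟩ <;>
    simp only [periodicPatch, if_neg (by omega : ¬j < s - k), if_pos hj₂,
      if_neg (by omega : ¬j + k < s - k), if_neg (by omega : ¬j + k < k),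
      if_neg (by omega : ¬j + k < s), if_pos (by omega : j + k < 2 * k), Nat.add_sub_cancel]

theorem periodicPatch_of_mem_Ico (hper : ∀ i, i < s → y i = y (i + k)) (hk2 : s ≤ 2 * k)
    {i : ℕ} (hi : i ∈ Ico k s) : periodicPatch s k x y i = y i := by
  obtain ⟨hi₁, hi₂⟩ := mem_Ico.mp hi
  rw [periodicPatch, if_neg (by omega), if_neg (by omega), if_pos hi₂]
  exact apply_sub_eq_of_periodic hper hi₁ (by omega)

theorem periodicPatch_of_mem_Ico_two_mul (hper : ∀ i, i < s → y i = y (i + k))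
    (hk2 : s ≤ 2 * k) {i : ℕ} (hi : i ∈ Ico (2 * k) (s + k)) : periodicPatch s k x y i = y i := by
  obtain ⟨hi₁, hi₂⟩ := mem_Ico.mp hi
  rw [periodicPatch, if_neg (by omega), if_neg (by omega), if_neg (by omega), if_neg (by omega),
    show i - 2 * k = i - k - k by omega, apply_sub_eq_of_periodic hper (by omega) (by omega),
    apply_sub_eq_of_periodic hper (by omega) hi₂]

end periodicPatch

/-- for `s/2 < k ≤ s`, `x, y ∈ Σ^{s+k}` with `d_H(x,y) ≤ t` and `y`
`k`-periodic (so `y = y_{I₁} y_{I₂} y_{I₁} y_{I₂} y_{I₁}` along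
`I₁ = [0, s-k), I₂ = [s-k, k), I₃ = [k, s), I₄ = [s, 2k), I₅ = [2k, s+k)`),
the string `y' = y_{I₁} x_{I₂} y_{I₁} x_{I₂} y_{I₁}` is also `k`-periodic and
satisfies `d_H(x, y') ≤ d_H(x, y) ≤ t`. -/
theorem stmt14 {α : Type*} [DecidableEq α] (s t k : ℕ)
    (hk : k ≤ s) (hk2 : s < 2 * k) (x y : ℕ → α)
    (hd : dH x y (s + k) ≤ t)
    (hper : ∀ i, i < s → y i = y (i + k)) :
    ∀ y' : ℕ → α,
      (y' = fun i =>
        if i < s - k then y i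
        else if i < k then x i
        else if i < s then y (i - k)
        else if i < 2 * k then x (i - k)
        else y (i - 2 * k)) →
      (∀ i, i < s → y' i = y' (i + k)) ∧
        dH x y' (s + k) ≤ dH x y (s + k) ∧ dH x y (s + k) ≤ t := by
  rintro y' rfl
  have hpair (j : ℕ) (hj : j ∈ Ico (s - k) k) :
      periodicPatch s k x y j = x j ∧ periodicPatch s k x y (j + k) = x j ∧ y j = y (j + k) :=
    ⟨(periodicPatch_of_mem_Ico_sub hj).1, (periodicPatch_of_mem_Ico_sub hj).2,
      hper j (by have := (mem_Ico.mp hj).2; omega)⟩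
  exact ⟨fun i hi => periodicPatch_add_period hk2.le hi,
    dH_le_of_eq_of_pairs hk hk2.le (fun i => periodicPatch_of_lt)
      (fun i => periodicPatch_of_mem_Ico hper hk2.le)
      (fun i => periodicPatch_of_mem_Ico_two_mul hper hk2.le) hpair, hd⟩
end

section
/- Among observable pairs (I,J) of s-subsets of [n] where each of I and J is contained in some interval of length s+t, the number of pairs (P,Q) of this type with (P ∪ Q) ∩ I ≠ ∅ is at most 2·s·(s+t)·n·C(s+t, s)^2. -/
open scoped Classical

/-- A pair `(P, Q)` of subsets of `[n]` is observable if, under increasing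
enumeration, the `k`-th element of `P` is strictly smaller than the `k`-th
element of `Q`, for every `k` (stated for subsets of common cardinality `s`). -/
def Observable {n : ℕ} (s : ℕ) (P Q : Finset (Fin n)) : Prop :=
  ∀ k, k < s →
    ∀ (h1 : k < (P.sort (· ≤ ·)).length) (h2 : k < (Q.sort (· ≤ ·)).length),
      (P.sort (· ≤ ·))[k] < (Q.sort (· ≤ ·))[k]

/-- `P` is contained in an interval of length `m`. -/
def InInterval {n : ℕ} (m : ℕ) (P : Finset (Fin n)) : Prop :=
  ∃ a : ℕ, ∀ p ∈ P, a ≤ (p : ℕ) ∧ (p : ℕ) < a + m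

/-!
Proof idea: a pair meeting `I` contains some `i ∈ I`, in `P` or in `Q`. The set containing `i`
lies in one of the `m = s + t` windows `[a, a + m)` through `i`, the other one in one of the
`n` windows starting inside `[n]`, and a window holds at most `C(m, s)` subsets of size `s`.
Summing over the `s` choices of `i` and the two roles gives `s · 2 · (m C(m, s)) · (n C(m, s))`.
-/

open Finset

namespace InInterval

def window (n a m : ℕ) : Finset (Fin n) :=
  univ.filter fun p : Fin n => a ≤ (p : ℕ) ∧ (p : ℕ) < a + m

variable {n : ℕ}

@[simp]
lemma mem_window {a m : ℕ} {p : Fin n} :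
    p ∈ window n a m ↔ a ≤ (p : ℕ) ∧ (p : ℕ) < a + m := by
  simp [window]

lemma card_window_le (a m : ℕ) : (window n a m).card ≤ m := by
  calc (window n a m).card ≤ (Ico a (a + m)).card :=
        card_le_card_of_injOn (fun p => (p : ℕ))
          (fun p hp => by simpa using hp) (fun p _ q _ h => Fin.val_injective h)
    _ = m := by simp

lemma card_le_of_forall_subset_window {m s : ℕ} (T : Finset ℕ) (S : Finset (Finset (Fin n)))
    (hS : ∀ P ∈ S, P.card = s ∧ ∃ a ∈ T, P ⊆ window n a m) :
    S.card ≤ T.card * m.choose s := by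
  have hsub : S ⊆ T.biUnion fun a => (window n a m).powersetCard s := by
    intro P hP
    obtain ⟨hcard, a, ha, hPa⟩ := hS P hP
    exact mem_biUnion.mpr ⟨a, ha, mem_powersetCard.mpr ⟨hPa, hcard⟩⟩
  calc S.card ≤ _ := card_le_card hsub
    _ ≤ _ := card_biUnion_le
    _ ≤ T.card * m.choose s := sum_le_card_nsmul _ _ _ fun a _ => by
        rw [card_powersetCard]
        exact Nat.choose_le_choose s (card_window_le a m)

lemma card_filter_nonempty_le (m s : ℕ) :
    ((univ.powersetCard s).filter fun Q : Finset (Fin n) => InInterval m Q ∧ Q.Nonempty).card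
      ≤ n * m.choose s := by
  simpa using card_le_of_forall_subset_window (range n) _ fun Q hQ => by
    simp only [mem_filter, mem_powersetCard] at hQ
    obtain ⟨⟨-, hcard⟩, ⟨a, ha⟩, q, hq⟩ := hQ
    exact ⟨hcard, a, mem_range.mpr ((ha q hq).1.trans_lt q.isLt),
      fun p hp => mem_window.mpr (ha p hp)⟩

lemma card_filter_mem_le (m s : ℕ) (i : Fin n) :
    ((univ.powersetCard s).filter fun P : Finset (Fin n) => InInterval m P ∧ i ∈ P).card
      ≤ m * m.choose s := by
  refine (card_le_of_forall_subset_window (Ico ((i : ℕ) + 1 - m) ((i : ℕ) + 1)) _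
    fun P hP => ?_).trans (Nat.mul_le_mul_right _ (by simp; omega))
  simp only [mem_filter, mem_powersetCard] at hP
  obtain ⟨⟨-, hcard⟩, ⟨a, ha⟩, hiP⟩ := hP
  have hai := ha i hiP
  exact ⟨hcard, a, mem_Ico.mpr ⟨by omega, by omega⟩, fun p hp => mem_window.mpr (ha p hp)⟩

lemma card_pairs_meeting_le (m s : ℕ) (I : Finset (Fin n)) :
    ((univ.powersetCard s ×ˢ univ.powersetCard s).filter
      fun PQ : Finset (Fin n) × Finset (Fin n) =>
        InInterval m PQ.1 ∧ InInterval m PQ.2 ∧ ((PQ.1 ∪ PQ.2) ∩ I).Nonempty).card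
      ≤ I.card * (2 * ((m * m.choose s) * (n * m.choose s))) := by
  set A := fun i : Fin n =>
    (univ.powersetCard s).filter fun P : Finset (Fin n) => InInterval m P ∧ i ∈ P
  set B := (univ.powersetCard s).filter fun Q : Finset (Fin n) => InInterval m Q ∧ Q.Nonempty
  have hsub : ((univ.powersetCard s ×ˢ univ.powersetCard s).filter
      fun PQ : Finset (Fin n) × Finset (Fin n) =>
        InInterval m PQ.1 ∧ InInterval m PQ.2 ∧ ((PQ.1 ∪ PQ.2) ∩ I).Nonempty)
      ⊆ I.biUnion fun i => A i ×ˢ B ∪ B ×ˢ A i := by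
    rintro ⟨P, Q⟩ hPQ
    simp only [mem_filter, mem_product, mem_powersetCard] at hPQ
    obtain ⟨⟨⟨-, hP⟩, -, hQ⟩, hPm, hQm, i, hi⟩ := hPQ
    rw [mem_inter, mem_union] at hi
    have nonempty_of_mem {X Y : Finset (Fin n)} (hX : X.card = s) (hY : Y.card = s)
        (hiX : i ∈ X) : Y.Nonempty :=
      card_pos.mp (by rw [hY, ← hX]; exact card_pos.mpr ⟨i, hiX⟩)
    refine mem_biUnion.mpr ⟨i, hi.2, ?_⟩
    rcases hi.1 with hiP | hiQ
    · exact mem_union_left _ (mem_product.mpr ⟨by simp [A, hP, hPm, hiP],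
        by simp [B, hQ, hQm, nonempty_of_mem hP hQ hiP]⟩)
    · exact mem_union_right _ (mem_product.mpr ⟨by simp [B, hP, hPm, nonempty_of_mem hQ hP hiQ],
        by simp [A, hQ, hQm, hiQ]⟩)
  calc _ ≤ _ := card_le_card hsub
    _ ≤ _ := card_biUnion_le
    _ ≤ I.card * (2 * ((m * m.choose s) * (n * m.choose s))) :=
        sum_le_card_nsmul _ _ _ fun i _ => by
          calc (A i ×ˢ B ∪ B ×ˢ A i).card ≤ (A i).card * B.card + B.card * (A i).card :=
                (card_union_le _ _).trans_eq (by rw [card_product, card_product])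
            _ = 2 * ((A i).card * B.card) := by ring
            _ ≤ _ := Nat.mul_le_mul_left 2
                (Nat.mul_le_mul (card_filter_mem_le m s i) (card_filter_nonempty_le m s))

end InInterval

theorem stmt15_general (n s t : ℕ) (I : Finset (Fin n))
    (hI : I.card = s) :
    ((Finset.univ.powersetCard s ×ˢ Finset.univ.powersetCard s).filter
      (fun PQ : Finset (Fin n) × Finset (Fin n) =>
        Observable s PQ.1 PQ.2 ∧ InInterval (s + t) PQ.1 ∧ InInterval (s + t) PQ.2 ∧
          ((PQ.1 ∪ PQ.2) ∩ I).Nonempty)).card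
      ≤ 2 * s * (s + t) * n * (Nat.choose (s + t) s) ^ 2 := by
  calc _ ≤ _ := card_le_card (monotone_filter_right _ fun _ _ h => h.2)
    _ ≤ _ := InInterval.card_pairs_meeting_le (s + t) s I
    _ = _ := by rw [hI]; ring

/-- fix an `s`-subset `I` of `[n]` contained in an interval of
length `s + t`.  The number of observable pairs `(P, Q)` of `s`-subsets of `[n]`,
each contained in an interval of length `s + t`, with `(P ∪ Q) ∩ I ≠ ∅`, is at
most `2·s·(s+t)·n·C(s+t, s)²`. -/
theorem stmt15 (n s t : ℕ) (I : Finset (Fin n))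
    (hI : I.card = s) (hIspan : InInterval (s + t) I) :
    ((Finset.univ.powersetCard s ×ˢ Finset.univ.powersetCard s).filter
      (fun PQ : Finset (Fin n) × Finset (Fin n) =>
        Observable s PQ.1 PQ.2 ∧ InInterval (s + t) PQ.1 ∧ InInterval (s + t) PQ.2 ∧
          ((PQ.1 ∪ PQ.2) ∩ I).Nonempty)).card
      ≤ 2 * s * (s + t) * n * (Nat.choose (s + t) s) ^ 2 :=
  stmt15_general n s t I hI
end
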